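/- For each fixed t > 0 and all 0 < u, v ≤ t, one has f(u)ᵀ·α_t·f(v) = ∫_t^∞ k(r,u)·k(r,v) dr + f(u)ᵀ·α_∞·f(v), where the improper integral converges. In particular the kernel system κ_t(u,v) := f(u)ᵀ·α_t·f(v) satisfies k(t,s) = κ_t(t,s) for all 0 < s ≤ t < ∞. -/

import Mathlib

open MeasureTheory Filter Topology Matrix Set

/-!
For `0 < a ≤ b` the resolvent identity `α_a - α_b = α_a (m_b - m_a) α_b` turns
`xᵀ (α_a - α_b) y` into `∫_a^b (xᵀ α_b f(r)) (f(r)ᵀ α_a y) dr`. On `[a, b]` the matrix `α` moves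
only by `O(∫_a^b |f|²)`, so this differs from `∫_a^b k(r, x) k(r, y) dr` by `O((∫_a^b |f|²)²)`.
Hence the increments of `w ↦ xᵀ α_w y + ∫_t^w k(r, x) k(r, y) dr` are bounded by a constant times
the squared increments of the continuous function `w ↦ ∫_t^w |f|²`, and such a function is
constant on `[t, T]`. Letting `T → ∞` gives the representation; the improper integral converges
because the integrand is nonnegative for `x = y`, and by polarization in general.
-/

theorem IsPreconnected.eq_of_abs_sub_le_mul_sq {X : Type*} [TopologicalSpace X] {s : Set X}
    (hs : IsPreconnected s) {h M : X → ℝ} (hM : ContinuousOn M s) {K : ℝ}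
    (hbound : ∀ x ∈ s, ∀ y ∈ s, |h y - h x| ≤ K * (M y - M x) ^ 2) {a b : X}
    (ha : a ∈ s) (hb : b ∈ s) : h b = h a := by
  wlog hab : M a ≤ M b generalizing a b
  · exact (this hb ha (le_of_not_ge hab)).symm
  have h_congr : ∀ x ∈ s, ∀ y ∈ s, M y = M x → h y = h x := fun x hx y hy hxy =>
    sub_eq_zero.1 <| abs_nonpos_iff.1 <| by simpa [hxy] using hbound x hx y hy
  have habs_le : ∀ N : ℕ, 0 < N → |h b - h a| ≤ K * (M b - M a) ^ 2 / N := by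
    intro N hN
    have hN' : (0 : ℝ) < N := Nat.cast_pos.2 hN
    let c : ℕ → ℝ := fun i => M a + i / N * (M b - M a)
    have hc : ∀ i ≤ N, c i ∈ M '' s := by
      intro i hi
      have hiN : (i : ℝ) / N ≤ 1 := div_le_one_of_le₀ (by exact_mod_cast hi) hN'.le
      refine hs.intermediate_value ha hb hM ⟨?_, ?_⟩
      · nlinarith [show (0 : ℝ) ≤ i / N by positivity]
      · nlinarith
    have : Nonempty X := ⟨a⟩
    choose! p hp using hc
    have hsum : h b - h a = ∑ i ∈ Finset.range N, (h (p (i + 1)) - h (p i)) := by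
      rw [Finset.sum_range_sub (fun i => h (p i)),
        h_congr b hb _ (hp N le_rfl).1 (by simp [(hp N le_rfl).2, c, hN'.ne']),
        h_congr a ha _ (hp 0 (Nat.zero_le N)).1 (by simp [(hp 0 (Nat.zero_le N)).2, c])]
    calc |h b - h a| ≤ ∑ i ∈ Finset.range N, |h (p (i + 1)) - h (p i)| := by
          rw [hsum]; exact Finset.abs_sum_le_sum_abs _ _
      _ ≤ ∑ i ∈ Finset.range N, K * ((M b - M a) / N) ^ 2 := by
          refine Finset.sum_le_sum fun i hi => ?_
          have hi : i < N := Finset.mem_range.1 hi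
          obtain ⟨hpi, hMi⟩ := hp i hi.le
          obtain ⟨hpi', hMi'⟩ := hp (i + 1) hi
          refine (hbound _ hpi _ hpi').trans_eq ?_
          rw [hMi, hMi']
          simp only [c]
          push_cast
          field_simp
          ring
      _ = K * (M b - M a) ^ 2 / N := by
          rw [Finset.sum_const, Finset.card_range, nsmul_eq_mul]
          field_simp
  have hle : |h b - h a| ≤ 0 :=
    ge_of_tendsto (tendsto_const_div_atTop_nhds_zero_nat _)
      (eventually_atTop.2 ⟨1, fun N hN => habs_le N hN⟩)
  exact sub_eq_zero.1 (abs_nonpos_iff.1 hle)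

theorem Matrix.IsSymm.mulVec_dotProduct_comm {ι R : Type*} [Fintype ι] [CommSemiring R]
    {A : Matrix ι ι R} (hA : A.IsSymm) (x y : ι → R) : A *ᵥ x ⬝ᵥ y = A *ᵥ y ⬝ᵥ x := by
  rw [dotProduct_comm, dotProduct_mulVec, ← mulVec_transpose, hA]

section Bilinear

variable {ι : Type*} [Fintype ι]

theorem dotProduct_mul_dotProduct (p q x : ι → ℝ) :
    (p ⬝ᵥ x) * (q ⬝ᵥ x) = ∑ i, ∑ j, p i * q j * (x i * x j) := by
  simp only [dotProduct, Finset.sum_mul_sum]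
  exact Finset.sum_congr rfl fun i _ => Finset.sum_congr rfl fun j _ => by ring

theorem sq_norm_le_dotProduct_self (x : ι → ℝ) : ‖x‖ ^ 2 ≤ x ⬝ᵥ x := by
  have hsq : ∀ i, |x i| ≤ √(x ⬝ᵥ x) := fun i => Real.abs_le_sqrt <| by
    simpa [dotProduct, sq] using
      Finset.single_le_sum (fun j _ => mul_self_nonneg (x j)) (Finset.mem_univ i)
  calc ‖x‖ ^ 2 ≤ √(x ⬝ᵥ x) ^ 2 := by
        gcongr; exact (pi_norm_le_iff_of_nonneg (Real.sqrt_nonneg _)).2 hsq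
    _ = x ⬝ᵥ x := Real.sq_sqrt (Finset.sum_nonneg fun i _ => mul_self_nonneg (x i))

theorem abs_mulVec_dotProduct_le {A : Matrix ι ι ℝ} {C : ℝ} (hA : ∀ i j, |A i j| ≤ C)
    (p q : ι → ℝ) : |A *ᵥ p ⬝ᵥ q| ≤ Fintype.card ι ^ 2 * C * ‖p‖ * ‖q‖ := by
  calc |A *ᵥ p ⬝ᵥ q| = |∑ i, ∑ j, A i j * p j * q i| := by
        simp only [dotProduct, mulVec, Finset.sum_mul]
    _ ≤ ∑ i, ∑ j, |A i j * p j * q i| :=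
        (Finset.abs_sum_le_sum_abs _ _).trans
          (Finset.sum_le_sum fun i _ => Finset.abs_sum_le_sum_abs _ _)
    _ ≤ ∑ _i : ι, ∑ _j : ι, C * ‖p‖ * ‖q‖ := by
        gcongr with i _ j _
        have hC : 0 ≤ C := (abs_nonneg _).trans (hA i j)
        rw [abs_mul, abs_mul]
        gcongr
        exacts [hA i j, norm_le_pi_norm p j, norm_le_pi_norm q i]
    _ = Fintype.card ι ^ 2 * C * ‖p‖ * ‖q‖ := by
        simp only [Finset.sum_const, Finset.card_univ, nsmul_eq_mul]
        ring

theorem IsCompact.exists_bound_mulVec_dotProduct {X : Type*} [TopologicalSpace X] {K : Set X}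
    (hK : IsCompact K) {A : X → Matrix ι ι ℝ} (hA : ContinuousOn A K) :
    ∃ C, 0 ≤ C ∧ ∀ x ∈ K, ∀ p q : ι → ℝ, |A x *ᵥ p ⬝ᵥ q| ≤ C * ‖p‖ * ‖q‖ := by
  obtain ⟨C, hC⟩ := hK.exists_bound_of_continuousOn (f := fun x => of.symm (A x)) hA
  refine ⟨Fintype.card ι ^ 2 * max C 0, by positivity,
    fun x hx p q => abs_mulVec_dotProduct_le (fun i j => ?_) p q⟩
  exact ((norm_le_pi_norm _ j).trans (norm_le_pi_norm (of.symm (A x)) i)).trans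
    ((hC x hx).trans (le_max_left _ _))

theorem Filter.Tendsto.mulVec_dotProduct {α : Type*} {l : Filter α} {B : α → Matrix ι ι ℝ}
    {A : Matrix ι ι ℝ} (hB : Tendsto B l (𝓝 A)) (x y : ι → ℝ) :
    Tendsto (fun a => B a *ᵥ x ⬝ᵥ y) l (𝓝 (A *ᵥ x ⬝ᵥ y)) :=
  (((continuous_id.matrix_mulVec continuous_const).dotProduct continuous_const).tendsto A).comp hB

variable {X : Type*} [MeasurableSpace X] {μ : Measure X} {f : X → ι → ℝ}

theorem integral_dotProduct_mul_dotProduct (hf : ∀ i j, Integrable (fun r => f r i * f r j) μ)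
    (p q : ι → ℝ) :
    ∫ r, (p ⬝ᵥ f r) * (q ⬝ᵥ f r) ∂μ = p ⬝ᵥ (of fun i j => ∫ r, f r i * f r j ∂μ) *ᵥ q := by
  simp only [dotProduct_mul_dotProduct]
  rw [integral_finsetSum _ fun i _ => integrable_finsetSum _ fun j _ => (hf i j).const_mul _]
  simp only [integral_finsetSum _ fun j _ => (hf _ j).const_mul _, integral_const_mul,
    dotProduct, mulVec, of_apply, Finset.mul_sum]
  exact Finset.sum_congr rfl fun i _ => Finset.sum_congr rfl fun j _ => by ring

theorem IsCompact.integrableOn_dotProduct_mul_dotProduct [TopologicalSpace X]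
    [OpensMeasurableSpace X] [T2Space X] {K : Set X} (hK : IsCompact K) {g h : X → ι → ℝ}
    (hg : ContinuousOn g K) (hh : ContinuousOn h K)
    (hf : ∀ i j, IntegrableOn (fun r => f r i * f r j) K μ) :
    IntegrableOn (fun r => (g r ⬝ᵥ f r) * (h r ⬝ᵥ f r)) K μ := by
  simp only [dotProduct_mul_dotProduct]
  refine integrable_finsetSum _ fun i _ => integrable_finsetSum _ fun j _ => ?_
  exact (hf i j).continuousOn_mul (((continuous_apply i).comp_continuousOn hg).mul
    ((continuous_apply j).comp_continuousOn hh)) hK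

end Bilinear

theorem setIntegral_Ioc_add_setIntegral_Ioc {g : ℝ → ℝ} {a b c : ℝ} (hab : a ≤ b) (hbc : b ≤ c)
    (hg : IntegrableOn g (Ioc a c)) :
    (∫ s in Ioc a b, g s) + ∫ s in Ioc b c, g s = ∫ s in Ioc a c, g s := by
  rw [← setIntegral_union (Ioc_disjoint_Ioc_of_le le_rfl) measurableSet_Ioc
    (hg.mono_set (Ioc_subset_Ioc_right hbc)) (hg.mono_set (Ioc_subset_Ioc_left hab)),
    Ioc_union_Ioc_eq_Ioc hab hbc]

section Gramian

variable {ι : Type*} {f : ℝ → ι → ℝ}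

noncomputable def gramian (f : ℝ → ι → ℝ) (a b : ℝ) : Matrix ι ι ℝ :=
  of fun i j => ∫ s in Ioc a b, f s i * f s j

theorem isSymm_gramian (a b : ℝ) : (gramian f a b).IsSymm := by
  ext i j
  simp only [gramian, transpose_apply, of_apply, mul_comm]

theorem gramian_add_gramian {a b c : ℝ} (hab : a ≤ b) (hbc : b ≤ c)
    (hf : ∀ i j, IntegrableOn (fun s => f s i * f s j) (Ioc a c)) :
    gramian f a b + gramian f b c = gramian f a c := by
  ext i j
  exact setIntegral_Ioc_add_setIntegral_Ioc hab hbc (hf i j)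

theorem integrableOn_Ioc_mul_of_integrableOn_sq (hf_meas : ∀ i, Measurable fun s => f s i)
    (hf_loc : ∀ i, ∀ t > (0 : ℝ), IntegrableOn (fun s => f s i ^ 2) (Ioc 0 t)) (i j : ι) (b : ℝ) :
    IntegrableOn (fun s => f s i * f s j) (Ioc 0 b) := by
  rcases le_or_gt b 0 with hb | hb
  · rw [Ioc_eq_empty (not_lt.2 hb)]
    exact integrableOn_empty
  · have hL2 (i : ι) : MemLp (fun s => f s i) 2 (volume.restrict (Ioc 0 b)) :=
      (memLp_two_iff_integrable_sq (hf_meas i).aestronglyMeasurable).2 (hf_loc i b hb)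
    exact (hL2 i).integrable_mul (hL2 j)

theorem continuousOn_gramian (hf : ∀ i j b, IntegrableOn (fun s => f s i * f s j) (Ioc 0 b)) :
    ContinuousOn (gramian f 0) (Ioi 0) := by
  intro t ht
  refine (continuousAt_pi.2 fun i => continuousAt_pi.2 fun j => ?_).continuousWithinAt
  have hint : IntegrableOn (fun s => f s i * f s j) (Icc 0 (t + 1)) :=
    (integrableOn_Icc_iff_integrableOn_Ioc enorm_ne_top).2 (hf i j (t + 1))
  exact (intervalIntegral.continuousOn_primitive hint).continuousAt
    (Icc_mem_nhds (mem_Ioi.1 ht) (lt_add_one t))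

variable [Fintype ι]

theorem dotProduct_gramian_mulVec {a b : ℝ}
    (hf : ∀ i j, IntegrableOn (fun s => f s i * f s j) (Ioc a b)) (p q : ι → ℝ) :
    p ⬝ᵥ gramian f a b *ᵥ q = ∫ s in Ioc a b, (p ⬝ᵥ f s) * (q ⬝ᵥ f s) :=
  (integral_dotProduct_mul_dotProduct hf p q).symm

theorem integrableOn_Ioc_dotProduct_mul_dotProduct
    (hf : ∀ i j b, IntegrableOn (fun s => f s i * f s j) (Ioc 0 b)) {a b : ℝ} (ha : 0 < a)
    {g h : ℝ → ι → ℝ} (hg : ContinuousOn g (Icc a b)) (hh : ContinuousOn h (Icc a b)) :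
    IntegrableOn (fun r => (g r ⬝ᵥ f r) * (h r ⬝ᵥ f r)) (Ioc a b) :=
  (isCompact_Icc.integrableOn_dotProduct_mul_dotProduct hg hh fun i j =>
    (hf i j b).mono_set fun _ hs => ⟨ha.trans_le hs.1, hs.2⟩).mono_set Ioc_subset_Icc_self

theorem integrableOn_Ioc_dotProduct_self
    (hf : ∀ i j b, IntegrableOn (fun s => f s i * f s j) (Ioc 0 b)) {a b : ℝ} (ha : 0 ≤ a) :
    IntegrableOn (fun s => f s ⬝ᵥ f s) (Ioc a b) :=
  integrable_finsetSum _ fun i _ => (hf i i b).mono_set (Ioc_subset_Ioc_left ha)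

variable [DecidableEq ι]

noncomputable def gramianInv (f : ℝ → ι → ℝ) (t : ℝ) : Matrix ι ι ℝ :=
  (gramian f 0 t)⁻¹

theorem isSymm_gramianInv (t : ℝ) : (gramianInv f t).IsSymm :=
  (isSymm_gramian 0 t).inv

theorem continuousOn_gramianInv (hf : ∀ i j b, IntegrableOn (fun s => f s i * f s j) (Ioc 0 b))
    (hinv : ∀ t > 0, IsUnit (gramian f 0 t)) : ContinuousOn (gramianInv f) (Ioi 0) := by
  intro t ht
  obtain ⟨u, hu⟩ := (isUnit_iff_isUnit_det _).1 (hinv t ht)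
  exact (continuousAt_matrix_inv _ (hu ▸ NormedRing.inverse_continuousAt u))
    |>.comp_continuousWithinAt (continuousOn_gramian hf t ht)

theorem gramianInv_sub_gramianInv (hf : ∀ i j b, IntegrableOn (fun s => f s i * f s j) (Ioc 0 b))
    (hinv : ∀ t > 0, IsUnit (gramian f 0 t)) {a b : ℝ} (ha : 0 < a) (hab : a ≤ b) :
    gramianInv f a - gramianInv f b = gramianInv f a * gramian f a b * gramianInv f b := by
  have hsub : gramian f 0 b - gramian f 0 a = gramian f a b := by
    rw [← gramian_add_gramian ha.le hab fun i j => hf i j b, add_sub_cancel_left]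
  rw [gramianInv, gramianInv,
    Matrix.inv_sub_inv (by simp [hinv a ha, hinv b (ha.trans_le hab)]), hsub]

theorem mulVec_gramianInv_dotProduct_sub
    (hf : ∀ i j b, IntegrableOn (fun s => f s i * f s j) (Ioc 0 b))
    (hinv : ∀ t > 0, IsUnit (gramian f 0 t)) {a b : ℝ} (ha : 0 < a) (hab : a ≤ b) (x y : ι → ℝ) :
    gramianInv f a *ᵥ x ⬝ᵥ y - gramianInv f b *ᵥ x ⬝ᵥ y
      = ∫ r in Ioc a b, (gramianInv f b *ᵥ x ⬝ᵥ f r) * (gramianInv f a *ᵥ y ⬝ᵥ f r) := by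
  rw [← sub_dotProduct, ← sub_mulVec, gramianInv_sub_gramianInv hf hinv ha hab, ← mulVec_mulVec,
    ← mulVec_mulVec, (isSymm_gramianInv a).mulVec_dotProduct_comm,
    dotProduct_gramian_mulVec fun i j => (hf i j b).mono_set (Ioc_subset_Ioc_left ha.le)]
  exact setIntegral_congr_fun measurableSet_Ioc fun r _ => mul_comm _ _

end Gramian

section Representation

variable {ι : Type*} [Fintype ι] [DecidableEq ι] {f : ℝ → ι → ℝ}

theorem integrableOn_Ioc_mulVec_gramianInv_dotProduct_mul
    (hf : ∀ i j b, IntegrableOn (fun s => f s i * f s j) (Ioc 0 b))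
    (hinv : ∀ t > 0, IsUnit (gramian f 0 t)) {a b : ℝ} (ha : 0 < a) (x y : ι → ℝ) :
    IntegrableOn (fun r => (gramianInv f r *ᵥ x ⬝ᵥ f r) * (gramianInv f r *ᵥ y ⬝ᵥ f r))
      (Ioc a b) := by
  have hcont (z : ι → ℝ) : ContinuousOn (fun r => gramianInv f r *ᵥ z) (Icc a b) :=
    (continuous_id.matrix_mulVec continuous_const).comp_continuousOn
      ((continuousOn_gramianInv hf hinv).mono fun r hr => ha.trans_le hr.1)
  exact integrableOn_Ioc_dotProduct_mul_dotProduct hf ha (hcont x) (hcont y)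

theorem abs_mulVec_gramianInv_dotProduct_sub_le
    (hf : ∀ i j b, IntegrableOn (fun s => f s i * f s j) (Ioc 0 b))
    (hinv : ∀ t > 0, IsUnit (gramian f 0 t)) {t T C : ℝ} (ht : 0 < t)
    (hC : ∀ r ∈ Icc t T, ∀ p q : ι → ℝ, |gramianInv f r *ᵥ p ⬝ᵥ q| ≤ C * ‖p‖ * ‖q‖)
    {a b c d : ℝ} (hta : t ≤ a) (hbT : b ≤ T) (hc : c ∈ Icc a b) (hd : d ∈ Icc a b)
    (x y : ι → ℝ) :
    |gramianInv f c *ᵥ x ⬝ᵥ y - gramianInv f d *ᵥ x ⬝ᵥ y|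
      ≤ C ^ 2 * ‖x‖ * ‖y‖ * ∫ s in Ioc a b, f s ⬝ᵥ f s := by
  wlog hcd : c ≤ d generalizing c d
  · rw [abs_sub_comm]
    exact this hd hc (le_of_not_ge hcd)
  have hc0 : 0 < c := ht.trans_le (hta.trans hc.1)
  have hbound : ∀ r ∈ Ioc c d,
      ‖(gramianInv f d *ᵥ x ⬝ᵥ f r) * (gramianInv f c *ᵥ y ⬝ᵥ f r)‖
        ≤ C ^ 2 * ‖x‖ * ‖y‖ * (f r ⬝ᵥ f r) := by
    intro r _
    have hx := hC d ⟨hta.trans hd.1, hd.2.trans hbT⟩ x (f r)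
    have hy := hC c ⟨hta.trans hc.1, hc.2.trans hbT⟩ y (f r)
    rw [Real.norm_eq_abs, abs_mul]
    calc _ ≤ (C * ‖x‖ * ‖f r‖) * (C * ‖y‖ * ‖f r‖) :=
          mul_le_mul hx hy (abs_nonneg _) ((abs_nonneg _).trans hx)
      _ = C ^ 2 * ‖x‖ * ‖y‖ * ‖f r‖ ^ 2 := by ring
      _ ≤ C ^ 2 * ‖x‖ * ‖y‖ * (f r ⬝ᵥ f r) := by
          gcongr
          exact sq_norm_le_dotProduct_self _
  rw [mulVec_gramianInv_dotProduct_sub hf hinv hc0 hcd]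
  calc _ ≤ ∫ r in Ioc c d, C ^ 2 * ‖x‖ * ‖y‖ * (f r ⬝ᵥ f r) :=
        norm_integral_le_of_norm_le ((integrableOn_Ioc_dotProduct_self hf hc0.le).const_mul _)
          (ae_restrict_of_forall_mem measurableSet_Ioc hbound)
    _ = C ^ 2 * ‖x‖ * ‖y‖ * ∫ r in Ioc c d, f r ⬝ᵥ f r := integral_const_mul _ _
    _ ≤ C ^ 2 * ‖x‖ * ‖y‖ * ∫ s in Ioc a b, f s ⬝ᵥ f s := by
        gcongr
        exacts [ae_of_all _ fun s => (sq_nonneg _).trans (sq_norm_le_dotProduct_self (f s)),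
          integrableOn_Ioc_dotProduct_self hf (ht.le.trans hta), hc.1, hd.2]

theorem abs_mulVec_gramianInv_dotProduct_sub_add_integral_le
    (hf : ∀ i j b, IntegrableOn (fun s => f s i * f s j) (Ioc 0 b))
    (hinv : ∀ t > 0, IsUnit (gramian f 0 t)) {t T C : ℝ} (ht : 0 < t) (hC0 : 0 ≤ C)
    (hC : ∀ r ∈ Icc t T, ∀ p q : ι → ℝ, |gramianInv f r *ᵥ p ⬝ᵥ q| ≤ C * ‖p‖ * ‖q‖)
    {a b : ℝ} (hta : t ≤ a) (hab : a ≤ b) (hbT : b ≤ T) (x y : ι → ℝ) :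
    |gramianInv f b *ᵥ x ⬝ᵥ y - gramianInv f a *ᵥ x ⬝ᵥ y
        + ∫ r in Ioc a b, (gramianInv f r *ᵥ x ⬝ᵥ f r) * (gramianInv f r *ᵥ y ⬝ᵥ f r)|
      ≤ 2 * C ^ 3 * ‖x‖ * ‖y‖ * (∫ s in Ioc a b, f s ⬝ᵥ f s) ^ 2 := by
  have ha : 0 < a := ht.trans_le hta
  set Δ := ∫ s in Ioc a b, f s ⬝ᵥ f s
  have hΔ : 0 ≤ Δ := setIntegral_nonneg measurableSet_Ioc fun s _ =>
    (sq_nonneg _).trans (sq_norm_le_dotProduct_self (f s))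
  have hpt : ∀ r ∈ Ioc a b,
      ‖(gramianInv f r *ᵥ x ⬝ᵥ f r) * (gramianInv f r *ᵥ y ⬝ᵥ f r)
          - (gramianInv f b *ᵥ x ⬝ᵥ f r) * (gramianInv f a *ᵥ y ⬝ᵥ f r)‖
        ≤ 2 * C ^ 3 * ‖x‖ * ‖y‖ * Δ * (f r ⬝ᵥ f r) := by
    intro r hr
    have hr' : r ∈ Icc a b := Ioc_subset_Icc_self hr
    have hx := abs_mulVec_gramianInv_dotProduct_sub_le hf hinv ht hC hta hbT hr'
      (right_mem_Icc.2 hab) x (f r)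
    have hy := abs_mulVec_gramianInv_dotProduct_sub_le hf hinv ht hC hta hbT hr'
      (left_mem_Icc.2 hab) y (f r)
    have hx' := hC b ⟨hta.trans hab, hbT⟩ x (f r)
    have hy' := hC r ⟨hta.trans hr'.1, hr'.2.trans hbT⟩ y (f r)
    rw [Real.norm_eq_abs]
    calc _ = |(gramianInv f r *ᵥ x ⬝ᵥ f r - gramianInv f b *ᵥ x ⬝ᵥ f r)
              * (gramianInv f r *ᵥ y ⬝ᵥ f r)
            + (gramianInv f b *ᵥ x ⬝ᵥ f r)
              * (gramianInv f r *ᵥ y ⬝ᵥ f r - gramianInv f a *ᵥ y ⬝ᵥ f r)| := by ring_nf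
      _ ≤ (C ^ 2 * ‖x‖ * ‖f r‖ * Δ) * (C * ‖y‖ * ‖f r‖)
            + (C * ‖x‖ * ‖f r‖) * (C ^ 2 * ‖y‖ * ‖f r‖ * Δ) := by
          refine (abs_add_le _ _).trans ?_
          rw [abs_mul, abs_mul]
          exact add_le_add (mul_le_mul hx hy' (abs_nonneg _) ((abs_nonneg _).trans hx))
            (mul_le_mul hx' hy (abs_nonneg _) ((abs_nonneg _).trans hx'))
      _ = 2 * C ^ 3 * ‖x‖ * ‖y‖ * Δ * ‖f r‖ ^ 2 := by ring
      _ ≤ 2 * C ^ 3 * ‖x‖ * ‖y‖ * Δ * (f r ⬝ᵥ f r) := by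
          gcongr
          exact sq_norm_le_dotProduct_self _
  rw [← neg_sub (gramianInv f a *ᵥ x ⬝ᵥ y), mulVec_gramianInv_dotProduct_sub hf hinv ha hab,
    neg_add_eq_sub, ← integral_sub
      (integrableOn_Ioc_mulVec_gramianInv_dotProduct_mul hf hinv ha x y)
      (integrableOn_Ioc_dotProduct_mul_dotProduct hf ha continuousOn_const continuousOn_const)]
  calc _ ≤ ∫ r in Ioc a b, 2 * C ^ 3 * ‖x‖ * ‖y‖ * Δ * (f r ⬝ᵥ f r) :=
        norm_integral_le_of_norm_le ((integrableOn_Ioc_dotProduct_self hf ha.le).const_mul _)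
          (ae_restrict_of_forall_mem measurableSet_Ioc hpt)
    _ = 2 * C ^ 3 * ‖x‖ * ‖y‖ * Δ ^ 2 := by
        rw [integral_const_mul]
        ring

theorem mulVec_gramianInv_dotProduct_sub_eq_integral
    (hf : ∀ i j b, IntegrableOn (fun s => f s i * f s j) (Ioc 0 b))
    (hinv : ∀ t > 0, IsUnit (gramian f 0 t)) {t T : ℝ} (ht : 0 < t) (htT : t ≤ T)
    (x y : ι → ℝ) :
    gramianInv f t *ᵥ x ⬝ᵥ y - gramianInv f T *ᵥ x ⬝ᵥ y
      = ∫ r in Ioc t T, (gramianInv f r *ᵥ x ⬝ᵥ f r) * (gramianInv f r *ᵥ y ⬝ᵥ f r) := by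
  obtain ⟨C, hC0, hC⟩ := isCompact_Icc.exists_bound_mulVec_dotProduct
    ((continuousOn_gramianInv hf hinv).mono fun r (hr : r ∈ Icc t T) => ht.trans_le hr.1)
  have hk := integrableOn_Ioc_mulVec_gramianInv_dotProduct_mul hf hinv (b := T) ht x y
  have hρ := integrableOn_Ioc_dotProduct_self hf (b := T) ht.le
  let H : ℝ → ℝ := fun w => gramianInv f w *ᵥ x ⬝ᵥ y
    + ∫ r in Ioc t w, (gramianInv f r *ᵥ x ⬝ᵥ f r) * (gramianInv f r *ᵥ y ⬝ᵥ f r)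
  let M : ℝ → ℝ := fun w => ∫ s in Ioc t w, f s ⬝ᵥ f s
  have hM : ContinuousOn M (Icc t T) := intervalIntegral.continuousOn_primitive
    ((integrableOn_Icc_iff_integrableOn_Ioc enorm_ne_top).2 hρ)
  have hincr : ∀ a ∈ Icc t T, ∀ b ∈ Icc t T, a ≤ b →
      |H b - H a| ≤ 2 * C ^ 3 * ‖x‖ * ‖y‖ * (M b - M a) ^ 2 := by
    intro a ha b hb hab
    have hsplit : ∀ {g : ℝ → ℝ}, IntegrableOn g (Ioc t T) →
        (∫ s in Ioc t b, g s) - ∫ s in Ioc t a, g s = ∫ s in Ioc a b, g s := fun hg => by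
      rw [← setIntegral_Ioc_add_setIntegral_Ioc ha.1 hab
        (hg.mono_set (Ioc_subset_Ioc_right hb.2)), add_sub_cancel_left]
    have hH : H b - H a = gramianInv f b *ᵥ x ⬝ᵥ y - gramianInv f a *ᵥ x ⬝ᵥ y
        + ∫ r in Ioc a b, (gramianInv f r *ᵥ x ⬝ᵥ f r) * (gramianInv f r *ᵥ y ⬝ᵥ f r) := by
      rw [← hsplit hk]
      ring
    rw [hH, show M b - M a = ∫ s in Ioc a b, f s ⬝ᵥ f s from hsplit hρ]
    exact abs_mulVec_gramianInv_dotProduct_sub_add_integral_le hf hinv ht hC0 hC ha.1 hab hb.2 x y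
  have hHT : H T = H t := by
    refine IsPreconnected.eq_of_abs_sub_le_mul_sq isPreconnected_Icc hM
      (K := 2 * C ^ 3 * ‖x‖ * ‖y‖) (fun a ha b hb => ?_)
      (left_mem_Icc.2 htT) (right_mem_Icc.2 htT)
    rcases le_total a b with hab | hba
    · exact hincr a ha b hb hab
    · rw [abs_sub_comm, ← neg_sub (M a), neg_sq]
      exact hincr b hb a ha hba
  simp only [H, Ioc_self, Measure.restrict_empty, integral_zero_measure, add_zero] at hHT
  linarith

theorem integrableOn_Ioi_mulVec_gramianInv_dotProduct_mul
    (hf : ∀ i j b, IntegrableOn (fun s => f s i * f s j) (Ioc 0 b))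
    (hinv : ∀ t > 0, IsUnit (gramian f 0 t)) {A : Matrix ι ι ℝ}
    (hA : Tendsto (gramianInv f) atTop (𝓝 A)) {t : ℝ} (ht : 0 < t) (x y : ι → ℝ) :
    IntegrableOn (fun r => (gramianInv f r *ᵥ x ⬝ᵥ f r) * (gramianInv f r *ᵥ y ⬝ᵥ f r))
      (Ioi t) := by
  have hsq : ∀ z : ι → ℝ, IntegrableOn
      (fun r => (gramianInv f r *ᵥ z ⬝ᵥ f r) * (gramianInv f r *ᵥ z ⬝ᵥ f r)) (Ioi t) := by
    intro z
    refine integrableOn_Ioi_of_intervalIntegral_norm_tendsto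
      (gramianInv f t *ᵥ z ⬝ᵥ z - A *ᵥ z ⬝ᵥ z) t
      (fun T => integrableOn_Ioc_mulVec_gramianInv_dotProduct_mul hf hinv ht z z) tendsto_id
      ((tendsto_const_nhds.sub (hA.mulVec_dotProduct z z)).congr' ?_)
    filter_upwards [eventually_ge_atTop t] with T hT
    rw [mulVec_gramianInv_dotProduct_sub_eq_integral hf hinv ht hT, id_eq,
      intervalIntegral.integral_of_le hT]
    simp only [Real.norm_eq_abs, abs_mul_self]
  have hpol : (fun r => (gramianInv f r *ᵥ x ⬝ᵥ f r) * (gramianInv f r *ᵥ y ⬝ᵥ f r))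
      = fun r => ((gramianInv f r *ᵥ (x + y) ⬝ᵥ f r) * (gramianInv f r *ᵥ (x + y) ⬝ᵥ f r)
        - (gramianInv f r *ᵥ (x - y) ⬝ᵥ f r) * (gramianInv f r *ᵥ (x - y) ⬝ᵥ f r)) / 4 := by
    ext r
    simp only [mulVec_add, mulVec_sub, add_dotProduct, sub_dotProduct]
    ring
  rw [hpol]
  exact ((hsq (x + y)).sub (hsq (x - y))).div_const 4

theorem mulVec_gramianInv_dotProduct_eq_integral_add
    (hf : ∀ i j b, IntegrableOn (fun s => f s i * f s j) (Ioc 0 b))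
    (hinv : ∀ t > 0, IsUnit (gramian f 0 t)) {A : Matrix ι ι ℝ}
    (hA : Tendsto (gramianInv f) atTop (𝓝 A)) {t : ℝ} (ht : 0 < t) (x y : ι → ℝ) :
    gramianInv f t *ᵥ x ⬝ᵥ y
      = (∫ r in Ioi t, (gramianInv f r *ᵥ x ⬝ᵥ f r) * (gramianInv f r *ᵥ y ⬝ᵥ f r))
        + A *ᵥ x ⬝ᵥ y := by
  have hlim := (intervalIntegral_tendsto_integral_Ioi t
    (integrableOn_Ioi_mulVec_gramianInv_dotProduct_mul hf hinv hA ht x y) tendsto_id).add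
    (hA.mulVec_dotProduct x y)
  refine tendsto_nhds_unique (tendsto_const_nhds.congr' ?_) hlim
  filter_upwards [eventually_ge_atTop t] with T hT
  rw [id_eq, intervalIntegral.integral_of_le hT,
    ← mulVec_gramianInv_dotProduct_sub_eq_integral hf hinv ht hT, sub_add_cancel]

end Representation

theorem kernel_system_representation_general
    (n : ℕ)
    (f : ℝ → Fin n → ℝ)
    (hf_meas : ∀ i, Measurable fun s => f s i)
    (hf_loc : ∀ i, ∀ t > (0 : ℝ), IntegrableOn (fun s => (f s i) ^ 2) (Set.Ioc 0 t))
    (m : ℝ → Matrix (Fin n) (Fin n) ℝ)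
    (hm : ∀ t, m t = Matrix.of fun i j => ∫ s in Set.Ioc 0 t, f s i * f s j)
    (hm_inv : ∀ t > (0 : ℝ), IsUnit (m t))
    (α : ℝ → Matrix (Fin n) (Fin n) ℝ)
    (hα : ∀ t, α t = (m t)⁻¹)
    (φ : ℝ → Fin n → ℝ)
    (hφ : ∀ t, φ t = (α t).mulVec (f t))
    (k : ℝ → ℝ → ℝ)
    (hk : ∀ s t : ℝ, 0 < s → s ≤ t → k t s = φ t ⬝ᵥ f s)
    (A : Matrix (Fin n) (Fin n) ℝ)
    (hA : ∀ i j, Tendsto (fun r => α r i j) atTop (𝓝 (A i j)))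
    (κ : ℝ → ℝ → ℝ → ℝ)
    (hκ : ∀ t u v : ℝ, κ t u v = f u ⬝ᵥ (α t).mulVec (f v)) :
    (∀ t > (0 : ℝ), ∀ u v : ℝ, 0 < u → u ≤ t → 0 < v → v ≤ t →
      IntegrableOn (fun r => k r u * k r v) (Set.Ioi t) ∧
      κ t u v = (∫ r in Set.Ioi t, k r u * k r v) + f u ⬝ᵥ A.mulVec (f v)) ∧
    (∀ s t : ℝ, 0 < s → s ≤ t → k t s = κ t t s) := by
  obtain rfl : m = gramian f 0 := funext hm
  obtain rfl : α = gramianInv f := funext hα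
  have hf := integrableOn_Ioc_mul_of_integrableOn_sq hf_meas hf_loc
  have hA' : Tendsto (gramianInv f) atTop (𝓝 A) :=
    tendsto_pi_nhds.2 fun i => tendsto_pi_nhds.2 (hA i)
  have hk' : ∀ s t, 0 < s → s ≤ t → k t s = gramianInv f t *ᵥ f s ⬝ᵥ f t := fun s t hs hst => by
    rw [hk s t hs hst, hφ, (isSymm_gramianInv t).mulVec_dotProduct_comm]
  refine ⟨fun t ht u v hu hut hv hvt => ?_, fun s t hs hst => ?_⟩
  · have hkk : EqOn (fun r => k r u * k r v)
        (fun r => (gramianInv f r *ᵥ f v ⬝ᵥ f r) * (gramianInv f r *ᵥ f u ⬝ᵥ f r)) (Ioi t) :=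
      fun r hr => by
        simp only [hk' u r hu (hut.trans hr.le), hk' v r hv (hvt.trans hr.le),
          mul_comm]
    refine ⟨(integrableOn_Ioi_mulVec_gramianInv_dotProduct_mul hf hm_inv hA' ht _ _).congr_fun
      hkk.symm measurableSet_Ioi, ?_⟩
    rw [setIntegral_congr_fun measurableSet_Ioi hkk, hκ, dotProduct_comm,
      mulVec_gramianInv_dotProduct_eq_integral_add hf hm_inv hA' ht, dotProduct_comm (A *ᵥ f v)]
  · rw [hk' s t hs hst, hκ, dotProduct_comm]

/-- For each fixed t > 0 and all 0 < u, v ≤ t, one has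
f(u)ᵀ·α_t·f(v) = ∫_t^∞ k(r,u)·k(r,v) dr + f(u)ᵀ·α_∞·f(v), where the improper integral
converges. In particular the kernel system κ_t(u,v) := f(u)ᵀ·α_t·f(v) satisfies
k(t,s) = κ_t(t,s) for all 0 < s ≤ t < ∞. -/
theorem kernel_system_representation
    (n : ℕ) (hn : 1 ≤ n)
    (f : ℝ → Fin n → ℝ)
    (hf_meas : ∀ i, Measurable fun s => f s i)
    (hf_loc : ∀ i, ∀ t > (0 : ℝ), IntegrableOn (fun s => (f s i) ^ 2) (Set.Ioc 0 t))
    (m : ℝ → Matrix (Fin n) (Fin n) ℝ)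
    (hm : ∀ t, m t = Matrix.of fun i j => ∫ s in Set.Ioc 0 t, f s i * f s j)
    (hm_inv : ∀ t > (0 : ℝ), IsUnit (m t))
    (α : ℝ → Matrix (Fin n) (Fin n) ℝ)
    (hα : ∀ t, α t = (m t)⁻¹)
    (φ : ℝ → Fin n → ℝ)
    (hφ : ∀ t, φ t = (α t).mulVec (f t))
    (k : ℝ → ℝ → ℝ)
    (hk : ∀ s t : ℝ, 0 < s → s ≤ t → k t s = φ t ⬝ᵥ f s)
    (A : Matrix (Fin n) (Fin n) ℝ)
    (hA : ∀ i j, Tendsto (fun r => α r i j) atTop (𝓝 (A i j)))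
    (κ : ℝ → ℝ → ℝ → ℝ)
    (hκ : ∀ t u v : ℝ, κ t u v = f u ⬝ᵥ (α t).mulVec (f v)) :
    (∀ t > (0 : ℝ), ∀ u v : ℝ, 0 < u → u ≤ t → 0 < v → v ≤ t →
      IntegrableOn (fun r => k r u * k r v) (Set.Ioi t) ∧
      κ t u v = (∫ r in Set.Ioi t, k r u * k r v) + f u ⬝ᵥ A.mulVec (f v)) ∧
    (∀ s t : ℝ, 0 < s → s ≤ t → k t s = κ t t s) :=
  kernel_system_representation_general n f hf_meas hf_loc m hm hm_inv α hα φ hφ k hk A hA κ hκ
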